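/- arXiv:1310.4103 — 7 statements merged into one kernel-verified Lean document; each statement's English description precedes it below -/
import Mathlib

section
/- Let A be a self-adjoint operator on a Hilbert space H with 0 in its resolvent set, and let τ : D(A) → 𝔥 be a bounded (with respect to the graph norm) surjective linear map into a Hilbert space 𝔥 whose kernel is dense in H. For z in the resolvent set of A define G_z := (τ ∘ (-A + z̄)⁻¹)* : 𝔥 → H. Then G_z is injective. -/
open scoped ComplexInnerProductSpace

/-- With `A` self-adjoint, `0 ∈ ρ(A)`, `τ : D(A) → 𝔥` graph-norm bounded,
surjective, with dense kernel, and `G_z := (τ ∘ (-A + z̄)⁻¹)*` (characterized by the adjoint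
relation `⟪G_z ξ, ψ⟫ = ⟪ξ, τ ((-A + z̄)⁻¹ ψ)⟫`), the map `G_z` is injective. -/
theorem Gz_injective
    {H 𝓗 : Type*} [NormedAddCommGroup H] [InnerProductSpace ℂ H] [CompleteSpace H]
    [NormedAddCommGroup 𝓗] [InnerProductSpace ℂ 𝓗] [CompleteSpace 𝓗]
    (A : H →ₗ.[ℂ] H) (hAdense : Dense (A.domain : Set H))
    (hAsa : A.adjoint = A)
    -- `0 ∈ ρ(A)`: `A` has a bounded everywhere-defined inverse
    (Ainv : H →L[ℂ] H) (hAinv_mem : ∀ ψ : H, Ainv ψ ∈ A.domain)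
    (hAinv : ∀ ψ : H, A ⟨Ainv ψ, hAinv_mem ψ⟩ = ψ)
    (hAinv' : ∀ x : A.domain, Ainv (A x) = (x : H))
    -- `τ` is linear, graph-norm bounded, surjective, with dense kernel
    (τ : A.domain →ₗ[ℂ] 𝓗)
    (hτbdd : ∃ C : ℝ, ∀ x : A.domain, ‖τ x‖ ≤ C * (‖(x : H)‖ + ‖A x‖))
    (hτsurj : Function.Surjective τ)
    (hτker : Dense (Subtype.val '' {x : A.domain | τ x = 0} : Set H))
    -- `z ∈ ρ(A)`: bounded resolvent `Rz = (-A + z̄)⁻¹`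
    (z : ℂ)
    (Rz : H →L[ℂ] H) (hRz_mem : ∀ ψ : H, Rz ψ ∈ A.domain)
    (hRz : ∀ ψ : H, -(A ⟨Rz ψ, hRz_mem ψ⟩) + (starRingEnd ℂ) z • Rz ψ = ψ)
    (hRz' : ∀ x : A.domain, Rz (-(A x) + (starRingEnd ℂ) z • (x : H)) = (x : H))
    -- `G_z := (τ (-A + z̄)⁻¹)*`
    (G : 𝓗 →L[ℂ] H)
    (hG : ∀ (ξ : 𝓗) (ψ : H), ⟪G ξ, ψ⟫ = ⟪ξ, τ ⟨Rz ψ, hRz_mem ψ⟩⟫) :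
    Function.Injective G := by
  suffices h : ∀ ξ : 𝓗, G ξ = 0 → ξ = 0 by
    intro a b hab
    have : G (a - b) = 0 := by rw [map_sub, hab, sub_self]
    exact sub_eq_zero.mp (h _ this)
  intro ξ hξ
  have key : ∀ η : 𝓗, ⟪ξ, η⟫ = 0 := by
    intro η
    obtain ⟨x, hx⟩ := hτsurj η
    set ψ : H := -(A x) + (starRingEnd ℂ) z • (x : H) with hψ
    have hx' : (⟨Rz ψ, hRz_mem ψ⟩ : A.domain) = x := Subtype.ext (hRz' x)
    have := hG ξ ψ
    rw [hξ, hx', hx] at this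
    simpa using this.symm
  have := key ξ
  rwa [inner_self_eq_zero] at this
end

section
/- With A, τ, G_z as above, for every z in the resolvent set of A one has R(G_z) ∩ D(A) = {0}, i.e. the only element of the range of G_z that lies in the domain of A is 0. -/
/-!
If `φ = G_z ξ`, then `⟪φ, (-A + z̄) x⟫ = ⟪ξ, τ x⟫`, so `φ` is orthogonal to `(-A + z̄)(ker τ)`.
When moreover `φ ∈ D(A)`, symmetry of `A` moves this to `(-A + z) φ ⊥ ker τ`, and density of
`ker τ` makes `φ` an eigenvector of `A` with eigenvalue `z`. Unless `φ = 0` the eigenvalue is then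
real, so `(-A + z̄) φ = 0`, and injectivity of `-A + z̄` gives `φ = 0` after all.
-/

open scoped ComplexInnerProductSpace ComplexConjugate

namespace LinearPMap

variable {𝕜 E : Type*} [RCLike 𝕜] [NormedAddCommGroup E] [InnerProductSpace 𝕜 E]
  {A : E →ₗ.[𝕜] E}

theorem _root_.IsSelfAdjoint.isFormalAdjoint_self [CompleteSpace E] (hA : IsSelfAdjoint A) :
    A.IsFormalAdjoint A := by
  simpa only [isSelfAdjoint_def.mp hA] using adjoint_isFormalAdjoint hA.dense_domain

theorem IsFormalAdjoint.conj_eq_of_apply_eq_smul (hA : A.IsFormalAdjoint A) {x : A.domain}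
    {μ : 𝕜} (hx : A x = μ • (x : E)) (hx₀ : (x : E) ≠ 0) : conj μ = μ := by
  have hxx : inner 𝕜 (x : E) x ≠ 0 := inner_self_ne_zero.mpr hx₀
  have h := hA x x
  rw [hx, inner_smul_left, inner_smul_right] at h
  exact mul_right_cancel₀ hxx h

theorem IsFormalAdjoint.apply_eq_smul_of_inner_eq_zero (hA : A.IsFormalAdjoint A)
    {S : Set A.domain} (hS : Dense (Subtype.val '' S : Set E)) {φ : A.domain} {μ : 𝕜}
    (hφ : ∀ x ∈ S, inner 𝕜 (φ : E) (-(A x) + conj μ • (x : E)) = 0) :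
    A φ = μ • (φ : E) := by
  refine hS.eq_of_inner_left 𝕜 ?_
  rintro _ ⟨x, hx, rfl⟩
  have h := hφ x hx
  rw [inner_add_right, inner_neg_right, neg_add_eq_zero] at h
  rw [hA φ x, h, inner_smul_left, inner_smul_right]

end LinearPMap

theorem range_Gz_inter_domain_eq_zero_general
    {H 𝓗 : Type*} [NormedAddCommGroup H] [InnerProductSpace ℂ H] [CompleteSpace H]
    [NormedAddCommGroup 𝓗] [InnerProductSpace ℂ 𝓗]
    (A : H →ₗ.[ℂ] H)
    (hAsa : A.adjoint = A)
    -- `τ` is linear, graph-norm bounded, surjective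
    (τ : A.domain →ₗ[ℂ] 𝓗)
    (hτker : Dense (Subtype.val '' {x : A.domain | τ x = 0} : Set H))
    -- `z ∈ ρ(A)`: bounded resolvent `Rz = (-A + z̄)⁻¹`
    (z : ℂ)
    (Rz : H →L[ℂ] H) (hRz_mem : ∀ ψ : H, Rz ψ ∈ A.domain)
    (hRz' : ∀ x : A.domain, Rz (-(A x) + (starRingEnd ℂ) z • (x : H)) = (x : H))
    -- `G_z := (τ (-A + z̄)⁻¹)*`
    (G : 𝓗 →L[ℂ] H)
    (hG : ∀ (ξ : 𝓗) (ψ : H), ⟪G ξ, ψ⟫ = ⟪ξ, τ ⟨Rz ψ, hRz_mem ψ⟩⟫) :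
    ∀ φ : H, (∃ ξ : 𝓗, G ξ = φ) → φ ∈ A.domain → φ = 0 := by
  rintro _ ⟨ξ, rfl⟩ hGξ
  have hsym : A.IsFormalAdjoint A := (LinearPMap.isSelfAdjoint_def.mpr hAsa).isFormalAdjoint_self
  have horth : ∀ x : A.domain, τ x = 0 → ⟪G ξ, -(A x) + conj z • (x : H)⟫ = 0 := by
    intro x hx
    rw [hG, show (⟨Rz _, hRz_mem _⟩ : A.domain) = x from Subtype.ext (hRz' x), hx,
      inner_zero_right]
  have heig : A ⟨G ξ, hGξ⟩ = z • G ξ := hsym.apply_eq_smul_of_inner_eq_zero hτker horth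
  by_contra hne
  have hreal : conj z = z := hsym.conj_eq_of_apply_eq_smul heig hne
  have h := hRz' ⟨G ξ, hGξ⟩
  rw [heig, hreal, neg_add_cancel, map_zero] at h
  exact hne h.symm

/-- For every z in the resolvent set of A, R(G_z) ∩ D(A) = {0}. -/
theorem range_Gz_inter_domain_eq_zero
    {H 𝓗 : Type*} [NormedAddCommGroup H] [InnerProductSpace ℂ H] [CompleteSpace H]
    [NormedAddCommGroup 𝓗] [InnerProductSpace ℂ 𝓗] [CompleteSpace 𝓗]
    (A : H →ₗ.[ℂ] H) (hAdense : Dense (A.domain : Set H))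
    (hAsa : A.adjoint = A)
    -- `0 ∈ ρ(A)`: `A` has a bounded everywhere-defined inverse
    (Ainv : H →L[ℂ] H) (hAinv_mem : ∀ ψ : H, Ainv ψ ∈ A.domain)
    (hAinv : ∀ ψ : H, A ⟨Ainv ψ, hAinv_mem ψ⟩ = ψ)
    (hAinv' : ∀ x : A.domain, Ainv (A x) = (x : H))
    -- `τ` is linear, graph-norm bounded, surjective
    (τ : A.domain →ₗ[ℂ] 𝓗)
    (hτbdd : ∃ C : ℝ, ∀ x : A.domain, ‖τ x‖ ≤ C * (‖(x : H)‖ + ‖A x‖))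
    (hτsurj : Function.Surjective τ)
    (hτker : Dense (Subtype.val '' {x : A.domain | τ x = 0} : Set H))
    -- `z ∈ ρ(A)`: bounded resolvent `Rz = (-A + z̄)⁻¹`
    (z : ℂ)
    (Rz : H →L[ℂ] H) (hRz_mem : ∀ ψ : H, Rz ψ ∈ A.domain)
    (hRz : ∀ ψ : H, -(A ⟨Rz ψ, hRz_mem ψ⟩) + (starRingEnd ℂ) z • Rz ψ = ψ)
    (hRz' : ∀ x : A.domain, Rz (-(A x) + (starRingEnd ℂ) z • (x : H)) = (x : H))
    -- `G_z := (τ (-A + z̄)⁻¹)*`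
    (G : 𝓗 →L[ℂ] H)
    (hG : ∀ (ξ : 𝓗) (ψ : H), ⟪G ξ, ψ⟫ = ⟪ξ, τ ⟨Rz ψ, hRz_mem ψ⟩⟫) :
    ∀ φ : H, (∃ ξ : 𝓗, G ξ = φ) → φ ∈ A.domain → φ = 0 :=
  range_Gz_inter_domain_eq_zero_general A hAsa τ hτker z Rz hRz_mem hRz' G hG
end

section
/- Let λ be an eigenvalue of the self-adjoint operator A with eigenprojection P_λ, and suppose there exist φ₀ ∈ D(A) and ξ ∈ 𝔥 with (A − λ)φ₀ = λ G₀ ξ, where G₀ := (τ(−A)⁻¹)*. Then P_λ G₀ ξ = 0 and ξ is orthogonal to the range of τ P_λ; equivalently, for all ψ ∈ H one has ⟨ξ, τ P_λ ψ⟩ = 0. -/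
open scoped ComplexInnerProductSpace

/-- If (A − λ)φ₀ = λ G₀ ξ then P_λ G₀ ξ = 0 and ξ ⟂ R(τ P_λ). -/
theorem eigencharge_orthogonal
    {H 𝓗 : Type*} [NormedAddCommGroup H] [InnerProductSpace ℂ H] [CompleteSpace H]
    [NormedAddCommGroup 𝓗] [InnerProductSpace ℂ 𝓗] [CompleteSpace 𝓗]
    (A : H →ₗ.[ℂ] H) (hAdense : Dense (A.domain : Set H))
    (hAsa : A.adjoint = A)
    -- `0 ∈ ρ(A)`: `A` has a bounded everywhere-defined inverse
    (Ainv : H →L[ℂ] H) (hAinv_mem : ∀ ψ : H, Ainv ψ ∈ A.domain)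
    (hAinv : ∀ ψ : H, A ⟨Ainv ψ, hAinv_mem ψ⟩ = ψ)
    (hAinv' : ∀ x : A.domain, Ainv (A x) = (x : H))
    -- `τ` is linear, graph-norm bounded, surjective
    (τ : A.domain →ₗ[ℂ] 𝓗)
    (hτbdd : ∃ C : ℝ, ∀ x : A.domain, ‖τ x‖ ≤ C * (‖(x : H)‖ + ‖A x‖))
    (hτsurj : Function.Surjective τ)
    -- `lam` is an eigenvalue of `A`, `P` the orthogonal projection onto `ker(A - lam)`
    (lam : ℝ)
    (hlam : ∃ x : A.domain, (x : H) ≠ 0 ∧ A x = (lam : ℂ) • (x : H))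
    (P : H →L[ℂ] H)
    (hP_mem : ∀ ψ : H, P ψ ∈ A.domain)
    (hP_idem : ∀ ψ : H, P (P ψ) = P ψ)
    (hP_sa : ∀ ψ φ : H, ⟪P ψ, φ⟫ = ⟪ψ, P φ⟫)
    (hP_eig : ∀ ψ : H, A ⟨P ψ, hP_mem ψ⟩ = (lam : ℂ) • P ψ)
    (hP_fix : ∀ x : A.domain, A x = (lam : ℂ) • (x : H) → P x = x)
    -- `G₀ := (τ (−A)⁻¹)*`
    (G0 : 𝓗 →L[ℂ] H)
    (hG0 : ∀ (ξ : 𝓗) (ψ : H), ⟪G0 ξ, ψ⟫ = ⟪ξ, τ ⟨-(Ainv ψ), neg_mem (hAinv_mem ψ)⟩⟫)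
    (φ₀ : A.domain) (ξ : 𝓗)
    (heq : A φ₀ - (lam : ℂ) • (φ₀ : H) = (lam : ℂ) • G0 ξ) :
    P (G0 ξ) = 0 ∧ ∀ ψ : H, ⟪ξ, τ ⟨P ψ, hP_mem ψ⟩⟫ = 0 := by
  -- symmetry of A
  have hsym : ∀ x y : A.domain, ⟪A x, (y : H)⟫ = ⟪(x : H), A y⟫ := by
    have h := A.adjoint_isFormalAdjoint hAdense
    rw [hAsa] at h
    exact h
  -- λ ≠ 0
  have hlam0 : (lam : ℂ) ≠ 0 := by
    intro h0
    obtain ⟨x, hx, hAx⟩ := hlam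
    apply hx
    have := hAinv' x
    rw [hAx, h0, zero_smul, map_zero] at this
    exact this.symm
  -- P (G0 ξ) = 0
  have key : ∀ ψ : H, ⟪G0 ξ, P ψ⟫ = 0 := by
    intro ψ
    have h1 : ⟪A φ₀ - (lam : ℂ) • (φ₀ : H), P ψ⟫ = 0 := by
      rw [inner_sub_left, inner_smul_left]
      have h2 : ⟪A φ₀, P ψ⟫ = ⟪(φ₀ : H), A ⟨P ψ, hP_mem ψ⟩⟫ := hsym φ₀ ⟨P ψ, hP_mem ψ⟩
      rw [h2, hP_eig, inner_smul_right]
      simp [Complex.conj_ofReal]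
    rw [heq, inner_smul_left] at h1
    have hc : (starRingEnd ℂ) (lam : ℂ) ≠ 0 := by
      simpa using hlam0
    rcases mul_eq_zero.mp h1 with h1 | h1
    · exact absurd h1 hc
    · exact h1
  have hPG0 : P (G0 ξ) = 0 := by
    have : ∀ ψ : H, ⟪P (G0 ξ), ψ⟫ = 0 := fun ψ => by rw [hP_sa]; exact key ψ
    have := this (P (G0 ξ))
    rwa [inner_self_eq_zero] at this
  refine ⟨hPG0, fun ψ => ?_⟩
  -- second part
  have hAinvP : Ainv ((lam : ℂ) • P ψ) = P ψ := by
    have := hAinv' ⟨P ψ, hP_mem ψ⟩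
    rwa [hP_eig] at this
  have hval : -(Ainv ((-(lam : ℂ)) • P ψ)) = P ψ := by
    rw [neg_smul, map_neg, neg_neg, hAinvP]
  have h3 := hG0 ξ ((-(lam : ℂ)) • P ψ)
  have h4 : ⟪G0 ξ, (-(lam : ℂ)) • P ψ⟫ = 0 := by
    rw [inner_smul_right, key ψ, mul_zero]
  rw [h4] at h3
  have h5 : (⟨-(Ainv ((-(lam : ℂ)) • P ψ)), neg_mem (hAinv_mem _)⟩ : A.domain)
      = ⟨P ψ, hP_mem ψ⟩ := Subtype.ext hval
  rw [h5] at h3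
  exact h3.symm
end

section
/- With A, τ, G_z as above and λ ∈ σ_p(A) isolated, define G_λ^⊥ := (τ(−A + λ)⁻¹ P_λ^⊥)*, where (−A+λ)⁻¹ denotes the inverse of (−A+λ) restricted to the range of P_λ^⊥. Then (G_λ^⊥)* G₀ = G₀* G_λ^⊥, i.e. ⟨G₀ξ, G_λ^⊥η⟩ = ⟨G_λ^⊥ξ, G₀η⟩ for all ξ, η ∈ 𝔥, so the operator G₀* G_λ^⊥ : 𝔥 → 𝔥 is symmetric. -/
open scoped ComplexInnerProductSpace

/-- (G_λ^⊥)* G₀ = G₀* G_λ^⊥, i.e. ⟪G₀ξ, G_λ^⊥η⟫ = ⟪G_λ^⊥ξ, G₀η⟫ for all ξ, η. -/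
theorem G0_star_Gl_symmetric
    {H 𝓗 : Type*} [NormedAddCommGroup H] [InnerProductSpace ℂ H] [CompleteSpace H]
    [NormedAddCommGroup 𝓗] [InnerProductSpace ℂ 𝓗] [CompleteSpace 𝓗]
    (A : H →ₗ.[ℂ] H) (hAdense : Dense (A.domain : Set H))
    (hAsa : A.adjoint = A)
    -- `0 ∈ ρ(A)`: `A` has a bounded everywhere-defined inverse
    (Ainv : H →L[ℂ] H) (hAinv_mem : ∀ ψ : H, Ainv ψ ∈ A.domain)
    (hAinv : ∀ ψ : H, A ⟨Ainv ψ, hAinv_mem ψ⟩ = ψ)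
    (hAinv' : ∀ x : A.domain, Ainv (A x) = (x : H))
    -- `τ` is linear, graph-norm bounded, surjective
    (τ : A.domain →ₗ[ℂ] 𝓗)
    (hτbdd : ∃ C : ℝ, ∀ x : A.domain, ‖τ x‖ ≤ C * (‖(x : H)‖ + ‖A x‖))
    (hτsurj : Function.Surjective τ)
    -- `lam` is an eigenvalue of `A`, `P` the orthogonal projection onto `ker(A - lam)`
    (lam : ℝ)
    (hlam : ∃ x : A.domain, (x : H) ≠ 0 ∧ A x = (lam : ℂ) • (x : H))
    (P : H →L[ℂ] H)
    (hP_mem : ∀ ψ : H, P ψ ∈ A.domain)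
    (hP_idem : ∀ ψ : H, P (P ψ) = P ψ)
    (hP_sa : ∀ ψ φ : H, ⟪P ψ, φ⟫ = ⟪ψ, P φ⟫)
    (hP_eig : ∀ ψ : H, A ⟨P ψ, hP_mem ψ⟩ = (lam : ℂ) • P ψ)
    (hP_fix : ∀ x : A.domain, A x = (lam : ℂ) • (x : H) → P x = x)
    -- `lam` is an isolated point of the spectrum: all nearby points are in the resolvent set
    (hiso : ∃ ε > 0, ∀ μ : ℂ, μ ≠ (lam : ℂ) → ‖μ - (lam : ℂ)‖ < ε →
      ∃ R : H →L[ℂ] H, ∃ hm : ∀ ψ : H, R ψ ∈ A.domain,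
        (∀ ψ : H, A ⟨R ψ, hm ψ⟩ - μ • R ψ = ψ) ∧
        (∀ x : A.domain, R (A x - μ • (x : H)) = (x : H)))
    -- `G₀ := (τ (−A)⁻¹)*`
    (G0 : 𝓗 →L[ℂ] H)
    (hG0 : ∀ (ξ : 𝓗) (ψ : H), ⟪G0 ξ, ψ⟫ = ⟪ξ, τ ⟨-(Ainv ψ), neg_mem (hAinv_mem ψ)⟩⟫)
    -- `Rlam := (−A+λ)⁻¹ P_λ^⊥`, the inverse of `(−A+λ)` on the range of `P_λ^⊥`
    (Rlam : H →L[ℂ] H) (hRlam_mem : ∀ ψ : H, Rlam ψ ∈ A.domain)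
    (hRlam_perp : ∀ ψ : H, P (Rlam ψ) = 0)
    (hRlam : ∀ ψ : H, -(A ⟨Rlam ψ, hRlam_mem ψ⟩) + (lam : ℂ) • Rlam ψ = ψ - P ψ)
    (hRlam' : ∀ x : A.domain, P (x : H) = 0 → Rlam (-(A x) + (lam : ℂ) • (x : H)) = (x : H))
    -- `G_λ^⊥ := (τ (−A+λ)⁻¹ P_λ^⊥)*`
    (Gl : 𝓗 →L[ℂ] H)
    (hGl : ∀ (ξ : 𝓗) (ψ : H), ⟪Gl ξ, ψ⟫ = ⟪ξ, τ ⟨Rlam ψ, hRlam_mem ψ⟩⟫)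
    :
    ∀ ξ η : 𝓗, ⟪G0 ξ, Gl η⟫ = ⟪Gl ξ, G0 η⟫ := by
  -- symmetry of A on its domain
  have hsym : ∀ x y : A.domain, ⟪A x, (y : H)⟫ = ⟪(x : H), A y⟫ := by
    have h := LinearPMap.adjoint_isFormalAdjoint hAdense
    rw [hAsa] at h
    exact fun x y => h x y
  -- symmetry of Rlam
  have hRsym : ∀ ψ φ : H, ⟪Rlam ψ, φ⟫ = ⟪ψ, Rlam φ⟫ := by
    intro ψ φ
    set u : A.domain := ⟨Rlam ψ, hRlam_mem ψ⟩ with hu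
    set v : A.domain := ⟨Rlam φ, hRlam_mem φ⟩ with hv
    have hφ : φ = (-(A v) + (lam : ℂ) • (v : H)) + P φ := by
      rw [hRlam φ]; abel
    have hψ : ψ = (-(A u) + (lam : ℂ) • (u : H)) + P ψ := by
      rw [hRlam ψ]; abel
    have h1 : ⟪(u : H), φ⟫ = -⟪A u, (v : H)⟫ + (lam : ℂ) * ⟪(u : H), (v : H)⟫ := by
      conv_lhs => rw [hφ]
      rw [inner_add_right, inner_add_right, inner_neg_right, inner_smul_right]
      have : ⟪(u : H), P φ⟫ = 0 := by
        rw [← hP_sa]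
        have : P (u : H) = 0 := hRlam_perp ψ
        rw [this, inner_zero_left]
      rw [hsym u v, this, add_zero]
    have h2 : ⟪ψ, (v : H)⟫ = -⟪A u, (v : H)⟫ + (lam : ℂ) * ⟪(u : H), (v : H)⟫ := by
      conv_lhs => rw [hψ]
      rw [inner_add_left, inner_add_left, inner_neg_left, inner_smul_left]
      have : ⟪P ψ, (v : H)⟫ = 0 := by
        rw [hP_sa]
        have : P (v : H) = 0 := hRlam_perp φ
        rw [this, inner_zero_right]
      rw [this, add_zero, Complex.conj_ofReal]
    exact h1.trans h2.symm
  -- key computation: ⟪Gl ξ, G0 η⟫ expanded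
  have key : ∀ ξ η : 𝓗, ⟪Gl ξ, G0 η⟫
      = ⟪G0 ξ, G0 η⟫ - ⟪G0 ξ, P (G0 η)⟫ - (lam : ℂ) * ⟪G0 ξ, Rlam (G0 η)⟫ := by
    intro ξ η
    set w : A.domain := ⟨Rlam (G0 η), hRlam_mem (G0 η)⟩ with hw
    have h1 : ⟪Gl ξ, G0 η⟫ = ⟪ξ, τ w⟫ := hGl ξ (G0 η)
    have h2 : ⟪G0 ξ, -(A w)⟫ = ⟪ξ, τ w⟫ := by
      rw [hG0 ξ (-(A w))]
      have harg : (⟨-(Ainv (-(A w))), neg_mem (hAinv_mem (-(A w)))⟩ : A.domain) = w := by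
        apply Subtype.ext
        simp [hAinv' w]
      rw [harg]
    have h3 : -(A w) = G0 η - P (G0 η) - (lam : ℂ) • Rlam (G0 η) := by
      have h := hRlam (G0 η)
      exact eq_sub_of_add_eq h
    rw [h1.trans h2.symm, h3, inner_sub_right, inner_sub_right, inner_smul_right]
  intro ξ η
  have h := key η ξ
  have hc := congrArg (starRingEnd ℂ) h
  rw [inner_conj_symm] at hc
  rw [hc, key ξ η]
  simp only [map_sub, map_mul, inner_conj_symm, Complex.conj_ofReal]
  rw [← hP_sa, hRsym]
end

section
/- With the notation above and λ ∈ σ_p(A) isolated, one has the identity (−A+λ)⁻¹ P_λ^⊥ G₀ = −A⁻¹ G_λ^⊥ as operators from 𝔥 to H. -/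
open scoped ComplexInnerProductSpace

/-- (−A+λ)⁻¹ P_λ^⊥ G₀ = −A⁻¹ G_λ^⊥ as operators from 𝔥 to H. -/
theorem resolvent_Pperp_G0_eq_neg_Ainv_Gl
    {H 𝓗 : Type*} [NormedAddCommGroup H] [InnerProductSpace ℂ H] [CompleteSpace H]
    [NormedAddCommGroup 𝓗] [InnerProductSpace ℂ 𝓗] [CompleteSpace 𝓗]
    (A : H →ₗ.[ℂ] H) (hAdense : Dense (A.domain : Set H))
    (hAsa : A.adjoint = A)
    -- `0 ∈ ρ(A)`: `A` has a bounded everywhere-defined inverse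
    (Ainv : H →L[ℂ] H) (hAinv_mem : ∀ ψ : H, Ainv ψ ∈ A.domain)
    (hAinv : ∀ ψ : H, A ⟨Ainv ψ, hAinv_mem ψ⟩ = ψ)
    (hAinv' : ∀ x : A.domain, Ainv (A x) = (x : H))
    -- `τ` is linear, graph-norm bounded, surjective
    (τ : A.domain →ₗ[ℂ] 𝓗)
    (hτbdd : ∃ C : ℝ, ∀ x : A.domain, ‖τ x‖ ≤ C * (‖(x : H)‖ + ‖A x‖))
    (hτsurj : Function.Surjective τ)
    -- `lam` is an eigenvalue of `A`, `P` the orthogonal projection onto `ker(A - lam)`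
    (lam : ℝ)
    (hlam : ∃ x : A.domain, (x : H) ≠ 0 ∧ A x = (lam : ℂ) • (x : H))
    (P : H →L[ℂ] H)
    (hP_mem : ∀ ψ : H, P ψ ∈ A.domain)
    (hP_idem : ∀ ψ : H, P (P ψ) = P ψ)
    (hP_sa : ∀ ψ φ : H, ⟪P ψ, φ⟫ = ⟪ψ, P φ⟫)
    (hP_eig : ∀ ψ : H, A ⟨P ψ, hP_mem ψ⟩ = (lam : ℂ) • P ψ)
    (hP_fix : ∀ x : A.domain, A x = (lam : ℂ) • (x : H) → P x = x)
    -- `lam` is an isolated point of the spectrum: all nearby points are in the resolvent set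
    (hiso : ∃ ε > 0, ∀ μ : ℂ, μ ≠ (lam : ℂ) → ‖μ - (lam : ℂ)‖ < ε →
      ∃ R : H →L[ℂ] H, ∃ hm : ∀ ψ : H, R ψ ∈ A.domain,
        (∀ ψ : H, A ⟨R ψ, hm ψ⟩ - μ • R ψ = ψ) ∧
        (∀ x : A.domain, R (A x - μ • (x : H)) = (x : H)))
    -- `G₀ := (τ (−A)⁻¹)*`
    (G0 : 𝓗 →L[ℂ] H)
    (hG0 : ∀ (ξ : 𝓗) (ψ : H), ⟪G0 ξ, ψ⟫ = ⟪ξ, τ ⟨-(Ainv ψ), neg_mem (hAinv_mem ψ)⟩⟫)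
    -- `Rlam := (−A+λ)⁻¹ P_λ^⊥`, the inverse of `(−A+λ)` on the range of `P_λ^⊥`
    (Rlam : H →L[ℂ] H) (hRlam_mem : ∀ ψ : H, Rlam ψ ∈ A.domain)
    (hRlam_perp : ∀ ψ : H, P (Rlam ψ) = 0)
    (hRlam : ∀ ψ : H, -(A ⟨Rlam ψ, hRlam_mem ψ⟩) + (lam : ℂ) • Rlam ψ = ψ - P ψ)
    (hRlam' : ∀ x : A.domain, P (x : H) = 0 → Rlam (-(A x) + (lam : ℂ) • (x : H)) = (x : H))
    -- `G_λ^⊥ := (τ (−A+λ)⁻¹ P_λ^⊥)*`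
    (Gl : 𝓗 →L[ℂ] H)
    (hGl : ∀ (ξ : 𝓗) (ψ : H), ⟪Gl ξ, ψ⟫ = ⟪ξ, τ ⟨Rlam ψ, hRlam_mem ψ⟩⟫)
    :
    ∀ ξ : 𝓗, Rlam (G0 ξ) = -(Ainv (Gl ξ)) := by

  -- A is symmetric
  have hsym : A.IsFormalAdjoint A := by
    have h := LinearPMap.adjoint_isFormalAdjoint hAdense (T := A)
    rwa [hAsa] at h
  have hAcongr : ∀ (a b : A.domain), (a : H) = (b : H) → A a = A b := by
    intro a b h; exact congrArg A (Subtype.ext h)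
  -- lam ≠ 0
  have hlam0 : (lam : ℂ) ≠ 0 := by
    obtain ⟨x, hx0, hAx⟩ := hlam
    intro h0
    apply hx0
    have := hAinv' x
    rw [hAx, h0, zero_smul, map_zero] at this
    exact this.symm
  -- Ainv is symmetric
  have hAinv_sym : ∀ w φ : H, ⟪Ainv w, φ⟫ = ⟪w, Ainv φ⟫ := by
    intro w φ
    have h1 : φ = A ⟨Ainv φ, hAinv_mem φ⟩ := (hAinv φ).symm
    calc ⟪Ainv w, φ⟫ = ⟪((⟨Ainv w, hAinv_mem w⟩ : A.domain) : H),
          A ⟨Ainv φ, hAinv_mem φ⟩⟫ := by rw [← h1]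
      _ = ⟪A ⟨Ainv w, hAinv_mem w⟩, Ainv φ⟫ := (hsym ⟨Ainv w, hAinv_mem w⟩ ⟨Ainv φ, hAinv_mem φ⟩).symm
      _ = ⟪w, Ainv φ⟫ := by rw [hAinv w]
  -- Ainv ∘ P = lam⁻¹ • P
  have hAinvP : ∀ φ : H, Ainv (P φ) = (lam : ℂ)⁻¹ • P φ := by
    intro φ
    have h1 := hAinv' ⟨P φ, hP_mem φ⟩
    rw [hP_eig φ] at h1
    rw [map_smul] at h1
    have : Ainv (P φ) = (lam : ℂ)⁻¹ • ((lam : ℂ) • Ainv (P φ)) := by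
      rw [smul_smul, inv_mul_cancel₀ hlam0, one_smul]
    rw [this, h1]
  -- P ∘ Ainv = lam⁻¹ • P
  have hPAinv : ∀ w : H, P (Ainv w) = (lam : ℂ)⁻¹ • P w := by
    intro w
    apply ext_inner_right ℂ
    intro φ
    calc ⟪P (Ainv w), φ⟫ = ⟪Ainv w, P φ⟫ := hP_sa _ _
      _ = ⟪w, Ainv (P φ)⟫ := hAinv_sym _ _
      _ = ⟪w, (lam : ℂ)⁻¹ • P φ⟫ := by rw [hAinvP]
      _ = (lam : ℂ)⁻¹ * ⟪w, P φ⟫ := inner_smul_right _ _ _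
      _ = (lam : ℂ)⁻¹ * ⟪P w, φ⟫ := by rw [hP_sa]
      _ = ⟪(lam : ℂ)⁻¹ • P w, φ⟫ := by
          rw [inner_smul_left]
          congr 1
          rw [← Complex.ofReal_inv, Complex.conj_ofReal]
  -- Rlam ∘ P = 0
  have hRlamP : ∀ φ : H, Rlam (P φ) = 0 := by
    intro φ
    have h1 := hRlam (P φ)
    rw [hP_idem φ, sub_self] at h1
    have h2 := hRlam' ⟨Rlam (P φ), hRlam_mem _⟩ (hRlam_perp _)
    rw [h1] at h2
    rw [map_zero] at h2
    exact h2.symm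
  intro ξ
  -- P (Gl ξ) = 0
  have hPGl : P (Gl ξ) = 0 := by
    apply ext_inner_right ℂ
    intro φ
    rw [inner_zero_left]
    calc ⟪P (Gl ξ), φ⟫ = ⟪Gl ξ, P φ⟫ := hP_sa _ _
      _ = ⟪ξ, τ ⟨Rlam (P φ), hRlam_mem _⟩⟫ := hGl _ _
      _ = 0 := by
          have : (⟨Rlam (P φ), hRlam_mem _⟩ : A.domain) = 0 := Subtype.ext (hRlamP φ)
          rw [this, map_zero, inner_zero_right]
  -- P (Ainv (Gl ξ)) = 0
  have hPv : P (Ainv (Gl ξ)) = 0 := by rw [hPAinv, hPGl, smul_zero]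
  apply ext_inner_right ℂ
  intro ψ
  set x : H := Rlam ψ with hx
  have hPx : P x = 0 := hRlam_perp ψ
  set xd : A.domain := ⟨Rlam ψ, hRlam_mem ψ⟩ with hxd
  have hψ : ψ = (-(A xd) + (lam : ℂ) • x) + P ψ := by
    rw [hRlam ψ]; abel
  set u : H := Rlam (G0 ξ) with hu
  set ud : A.domain := ⟨Rlam (G0 ξ), hRlam_mem (G0 ξ)⟩ with hud
  have hAu : A ud = (lam : ℂ) • u - G0 ξ + P (G0 ξ) := by
    have h1 := hRlam (G0 ξ)
    have : A ud = (lam : ℂ) • Rlam (G0 ξ) - (G0 ξ - P (G0 ξ)) := by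
      rw [← h1]; abel
    rw [this]; abel
  -- LHS computation
  have hL : ⟪u, ψ⟫ = ⟪ξ, τ ⟨-(Ainv x), neg_mem (hAinv_mem x)⟩⟫ := by
    rw [hψ]
    rw [inner_add_right, inner_add_right, inner_neg_right, inner_smul_right]
    have h1 : ⟪u, P ψ⟫ = 0 := by
      rw [← hP_sa, hRlam_perp, inner_zero_left]
    have h2 : ⟪u, A xd⟫ = ⟪A ud, x⟫ := (hsym ud xd).symm
    rw [h1, h2, hAu]
    rw [inner_add_left, inner_sub_left, inner_smul_left]
    have hc : (starRingEnd ℂ) (lam : ℂ) = (lam : ℂ) := Complex.conj_ofReal lam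
    rw [hc]
    have h3 : ⟪P (G0 ξ), x⟫ = 0 := by rw [hP_sa, hPx, inner_zero_right]
    rw [h3]
    have h4 : ⟪G0 ξ, x⟫ = ⟪ξ, τ ⟨-(Ainv x), neg_mem (hAinv_mem x)⟩⟫ := hG0 ξ x
    rw [← h4]; ring
  -- RHS computation
  have hRlamKey : Rlam (x - (lam : ℂ) • Ainv x) = -(Ainv x) := by
    have hPz : P (-(Ainv x)) = 0 := by
      rw [map_neg, hPAinv, hPx, smul_zero, neg_zero]
    have h1 := hRlam' ⟨-(Ainv x), neg_mem (hAinv_mem x)⟩ hPz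
    have h2 : A (⟨-(Ainv x), neg_mem (hAinv_mem x)⟩ : A.domain) = -x := by
      have : (⟨-(Ainv x), neg_mem (hAinv_mem x)⟩ : A.domain)
          = -(⟨Ainv x, hAinv_mem x⟩ : A.domain) := rfl
      rw [this, LinearPMap.map_neg, hAinv]
    rw [h2, neg_neg] at h1
    have h3 : x + (lam : ℂ) • -(Ainv x) = x - (lam : ℂ) • Ainv x := by
      rw [smul_neg]; abel
    rw [h3] at h1
    exact h1
  have hR : ⟪-(Ainv (Gl ξ)), ψ⟫ = ⟪ξ, τ ⟨-(Ainv x), neg_mem (hAinv_mem x)⟩⟫ := by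
    rw [hψ]
    rw [inner_add_right, inner_add_right, inner_neg_right, inner_smul_right]
    have h1 : ⟪-(Ainv (Gl ξ)), P ψ⟫ = 0 := by
      rw [← hP_sa, map_neg, hPv, neg_zero, inner_zero_left]
    have h2 : ⟪-(Ainv (Gl ξ)), A xd⟫ = -⟪Gl ξ, x⟫ := by
      rw [inner_neg_left]
      congr 1
      calc ⟪Ainv (Gl ξ), A xd⟫
          = ⟪((⟨Ainv (Gl ξ), hAinv_mem _⟩ : A.domain) : H), A xd⟫ := rfl
        _ = ⟪A ⟨Ainv (Gl ξ), hAinv_mem _⟩, (xd : H)⟫ := (hsym _ xd).symm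
        _ = ⟪Gl ξ, x⟫ := by rw [hAinv]
    have h3 : ⟪-(Ainv (Gl ξ)), x⟫ = -⟪Gl ξ, Ainv x⟫ := by
      rw [inner_neg_left, hAinv_sym]
    rw [h1, h2, h3, add_zero, neg_neg]
    have h4 : ⟪Gl ξ, x⟫ + (lam : ℂ) * -⟪Gl ξ, Ainv x⟫ = ⟪Gl ξ, x - (lam : ℂ) • Ainv x⟫ := by
      rw [inner_sub_right, inner_smul_right]; ring
    rw [h4, hGl]
    congr 1
    exact congrArg τ (Subtype.ext hRlamKey)
  rw [hL, hR]
end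

section
/- Let A be self-adjoint on H with 0 ∈ ρ(A), τ : D(A) → 𝔥 graph-norm bounded surjective, λ ∈ σ_p(A), Π an orthogonal projection on 𝔥 with R(Π) ∩ (R(τP_λ))^⊥ = {0}, and Θ a self-adjoint operator in R(Π). Then every eigenvector φ of the extension A^{Π,Θ} with eigenvalue λ satisfies φ ∈ ker(A−λ) and Πτφ = 0; conversely every ψ ∈ ker(A−λ) with Πτψ = 0 and 0 = Θ·0 trivially satisfies the boundary condition, so λ ∈ σ_p(A^{Π,Θ}) if and only if K_λ^Π := {ψ ∈ ker(A−λ) : Πτψ = 0} ≠ {0}, and in that case the λ-eigenspace of A^{Π,Θ} equals K_λ^Π. -/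
open scoped ComplexInnerProductSpace

/-- Theorem 2.2, part 1: Assume R(Π) ∩ (R(τP_λ))^⊥ = {0}. Then every
λ-eigenvector φ = φ₀ + G₀ξ of A^{Π,Θ} satisfies G₀ξ = 0, φ₀ ∈ ker(A−λ) and Πτφ₀ = 0;
λ ∈ σ_p(A^{Π,Θ}) iff K_λ^Π := {ψ ∈ ker(A−λ) : Πτψ = 0} ≠ {0}; and the λ-eigenspace of
A^{Π,Θ} equals K_λ^Π. -/
theorem common_eigenvalue_case_one
    {H 𝓗 : Type*} [NormedAddCommGroup H] [InnerProductSpace ℂ H] [CompleteSpace H]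
    [NormedAddCommGroup 𝓗] [InnerProductSpace ℂ 𝓗] [CompleteSpace 𝓗]
    (A : H →ₗ.[ℂ] H) (hAdense : Dense (A.domain : Set H))
    (hAsa : A.adjoint = A)
    -- `0 ∈ ρ(A)`: `A` has a bounded everywhere-defined inverse
    (Ainv : H →L[ℂ] H) (hAinv_mem : ∀ ψ : H, Ainv ψ ∈ A.domain)
    (hAinv : ∀ ψ : H, A ⟨Ainv ψ, hAinv_mem ψ⟩ = ψ)
    (hAinv' : ∀ x : A.domain, Ainv (A x) = (x : H))
    -- `τ` is linear, graph-norm bounded, surjective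
    (τ : A.domain →ₗ[ℂ] 𝓗)
    (hτbdd : ∃ C : ℝ, ∀ x : A.domain, ‖τ x‖ ≤ C * (‖(x : H)‖ + ‖A x‖))
    (hτsurj : Function.Surjective τ)
    (hτker : Dense (Subtype.val '' {x : A.domain | τ x = 0} : Set H))
    -- `lam` is an eigenvalue of `A`, `P` the orthogonal projection onto `ker(A - lam)`
    (lam : ℝ)
    (hlam : ∃ x : A.domain, (x : H) ≠ 0 ∧ A x = (lam : ℂ) • (x : H))
    (P : H →L[ℂ] H)
    (hP_mem : ∀ ψ : H, P ψ ∈ A.domain)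
    (hP_idem : ∀ ψ : H, P (P ψ) = P ψ)
    (hP_sa : ∀ ψ φ : H, ⟪P ψ, φ⟫ = ⟪ψ, P φ⟫)
    (hP_eig : ∀ ψ : H, A ⟨P ψ, hP_mem ψ⟩ = (lam : ℂ) • P ψ)
    (hP_fix : ∀ x : A.domain, A x = (lam : ℂ) • (x : H) → P x = x)
    -- `G₀ := (τ (−A)⁻¹)*`
    (G0 : 𝓗 →L[ℂ] H)
    (hG0 : ∀ (ξ : 𝓗) (ψ : H), ⟪G0 ξ, ψ⟫ = ⟪ξ, τ ⟨-(Ainv ψ), neg_mem (hAinv_mem ψ)⟩⟫)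
    -- `Pr` is an orthogonal projection in 𝔥
    (Pr : 𝓗 →L[ℂ] 𝓗)
    (hPr_idem : ∀ ζ : 𝓗, Pr (Pr ζ) = Pr ζ)
    (hPr_sa : ∀ ζ η : 𝓗, ⟪Pr ζ, η⟫ = ⟪ζ, Pr η⟫)
    -- `Θ` is a self-adjoint operator in R(Pr)
    (DΘ : Submodule ℂ 𝓗) (hDΘ_mem : ∀ ξ : DΘ, Pr (ξ : 𝓗) = (ξ : 𝓗))
    (Θ : DΘ →ₗ[ℂ] 𝓗)
    (hΘ_range : ∀ ξ : DΘ, Pr (Θ ξ) = Θ ξ)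
    (hΘ_symm : ∀ ξ η : DΘ, ⟪Θ ξ, (η : 𝓗)⟫ = ⟪(ξ : 𝓗), Θ η⟫)
    (hΘ_sa : ∀ y z : 𝓗, Pr y = y → Pr z = z →
      (∀ ξ : DΘ, ⟪Θ ξ, y⟫ = ⟪(ξ : 𝓗), z⟫) → y ∈ DΘ)
    -- key hypothesis: R(Π) ∩ (R(τ P_λ))^⊥ = {0}
    (hkey : ∀ ζ : 𝓗, Pr ζ = ζ → (∀ ψ : H, ⟪ζ, τ ⟨P ψ, hP_mem ψ⟩⟫ = 0) → ζ = 0) :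
    -- every eigenvector of A^{Π,Θ} with eigenvalue λ lies in ker(A−λ) and Πτφ = 0
    (∀ (φ₀ : A.domain) (ξ : DΘ), Pr (τ φ₀) = Θ ξ →
      A φ₀ = (lam : ℂ) • ((φ₀ : H) + G0 (ξ : 𝓗)) →
      G0 (ξ : 𝓗) = 0 ∧ A φ₀ = (lam : ℂ) • (φ₀ : H) ∧ Pr (τ φ₀) = 0) ∧
    -- λ ∈ σ_p(A^{Π,Θ}) iff K_λ^Π ≠ {0}
    ((∃ (φ₀ : A.domain) (ξ : DΘ), Pr (τ φ₀) = Θ ξ ∧ (φ₀ : H) + G0 (ξ : 𝓗) ≠ 0 ∧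
        A φ₀ = (lam : ℂ) • ((φ₀ : H) + G0 (ξ : 𝓗))) ↔
      (∃ ψ : A.domain, (ψ : H) ≠ 0 ∧ A ψ = (lam : ℂ) • (ψ : H) ∧ Pr (τ ψ) = 0)) ∧
    -- the λ-eigenspace of A^{Π,Θ} equals K_λ^Π
    (∀ φ : H,
      (∃ (φ₀ : A.domain) (ξ : DΘ), Pr (τ φ₀) = Θ ξ ∧ φ = (φ₀ : H) + G0 (ξ : 𝓗) ∧
        A φ₀ = (lam : ℂ) • φ) ↔
      (∃ hφ : φ ∈ A.domain, A ⟨φ, hφ⟩ = (lam : ℂ) • φ ∧ Pr (τ ⟨φ, hφ⟩) = 0)) := by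
  -- λ ≠ 0
  have hlamne : (lam : ℂ) ≠ 0 := by
    obtain ⟨x, hx0, hx⟩ := hlam
    intro h0
    have h1 := hAinv' x
    rw [hx, h0, zero_smul, map_zero] at h1
    exact hx0 h1.symm
  -- symmetry of A
  have hsym : ∀ x y : A.domain, ⟪A x, (y : H)⟫ = ⟪(x : H), A y⟫ := by
    have h := LinearPMap.adjoint_isFormalAdjoint (T := A) hAdense
    rw [hAsa] at h
    exact h
  -- A⁻¹ on eigenvectors
  have hAinvP : ∀ χ : H, Ainv (P χ) = (lam : ℂ)⁻¹ • P χ := by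
    intro χ
    have h1 := hAinv' ⟨P χ, hP_mem χ⟩
    rw [hP_eig χ, map_smul] at h1
    exact ((inv_smul_eq_iff₀ hlamne).2 h1.symm).symm
  -- inner product of G0 ξ with eigenvectors
  have hG0P : ∀ (ζ : 𝓗) (χ : H),
      ⟪G0 ζ, P χ⟫ = -(lam : ℂ)⁻¹ * ⟪ζ, τ ⟨P χ, hP_mem χ⟩⟫ := by
    intro ζ χ
    have harg : (⟨-(Ainv (P χ)), neg_mem (hAinv_mem (P χ))⟩ : A.domain)
        = (-(lam : ℂ)⁻¹) • (⟨P χ, hP_mem χ⟩ : A.domain) := by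
      apply Subtype.ext
      simp [hAinvP χ, neg_smul]
    rw [hG0 ζ (P χ), harg, map_smul, inner_smul_right]
  -- core: the boundary-eigenvector condition forces ξ = 0
  have key : ∀ (φ₀ : A.domain) (ξ : DΘ), Pr (τ φ₀) = Θ ξ →
      A φ₀ = (lam : ℂ) • ((φ₀ : H) + G0 (ξ : 𝓗)) → (ξ : 𝓗) = 0 := by
    intro φ₀ ξ _hbc heig
    apply hkey (ξ : 𝓗) (hDΘ_mem ξ)
    intro χ
    have h2 : ⟪A φ₀, P χ⟫ = (lam : ℂ) * ⟪(φ₀ : H), P χ⟫ := by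
      rw [hsym φ₀ ⟨P χ, hP_mem χ⟩, hP_eig χ, inner_smul_right]
    have h3 : ⟪A φ₀, P χ⟫
        = (lam : ℂ) * (⟪(φ₀ : H), P χ⟫ + ⟪G0 (ξ : 𝓗), P χ⟫) := by
      rw [heig, inner_smul_left, inner_add_left, Complex.conj_ofReal]
    have h4 : (lam : ℂ) * ⟪G0 (ξ : 𝓗), P χ⟫ = 0 := by
      rw [h2] at h3
      linear_combination -h3
    have h5 : ⟪G0 (ξ : 𝓗), P χ⟫ = 0 := by
      rcases mul_eq_zero.1 h4 with h | h
      · exact absurd h hlamne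
      · exact h
    rw [hG0P (ξ : 𝓗) χ] at h5
    rcases mul_eq_zero.1 h5 with h | h
    · exact absurd h (by simpa using inv_ne_zero hlamne)
    · exact h
  have part1 : ∀ (φ₀ : A.domain) (ξ : DΘ), Pr (τ φ₀) = Θ ξ →
      A φ₀ = (lam : ℂ) • ((φ₀ : H) + G0 (ξ : 𝓗)) →
      G0 (ξ : 𝓗) = 0 ∧ A φ₀ = (lam : ℂ) • (φ₀ : H) ∧ Pr (τ φ₀) = 0 := by
    intro φ₀ ξ hbc heig
    have hξ := key φ₀ ξ hbc heig
    have hξ0 : ξ = 0 := Subtype.ext hξ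
    refine ⟨by rw [hξ, map_zero], ?_, ?_⟩
    · rw [heig, hξ, map_zero, add_zero]
    · rw [hbc, hξ0, map_zero]
  refine ⟨part1, ?_, ?_⟩
  · constructor
    · rintro ⟨φ₀, ξ, hbc, hne, heig⟩
      obtain ⟨hG0z, heig', hPr0⟩ := part1 φ₀ ξ hbc heig
      refine ⟨φ₀, ?_, heig', hPr0⟩
      rw [hG0z, add_zero] at hne
      exact hne
    · rintro ⟨ψ, hne, heig, hPr0⟩
      refine ⟨ψ, 0, ?_, ?_, ?_⟩
      · rw [map_zero, hPr0]
      · simpa using hne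
      · simpa using heig
  · intro φ
    constructor
    · rintro ⟨φ₀, ξ, hbc, hphi, heig⟩
      have heig' : A φ₀ = (lam : ℂ) • ((φ₀ : H) + G0 (ξ : 𝓗)) := by
        rw [← hphi]; exact heig
      have hξ := key φ₀ ξ hbc heig'
      have hφeq : φ = (φ₀ : H) := by rw [hphi, hξ, map_zero, add_zero]
      have hφ : φ ∈ A.domain := hφeq ▸ φ₀.2
      have hsub : (⟨φ, hφ⟩ : A.domain) = φ₀ := Subtype.ext hφeq
      obtain ⟨_, heig'', hPr0⟩ := part1 φ₀ ξ hbc heig'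
      refine ⟨hφ, ?_, ?_⟩
      · rw [hsub, heig'', hφeq]
      · rw [hsub, hPr0]
    · rintro ⟨hφ, heig, hPr0⟩
      refine ⟨⟨φ, hφ⟩, 0, ?_, ?_, ?_⟩
      · rw [map_zero, hPr0]
      · simp
      · simpa using heig
end

section
/- In the rank-one setting 𝔥 = ℂ with λ ∈ σ_p(A) a simple isolated eigenvalue with normalized eigenvector ψ_λ and R(τP_λ) = ℂ (i.e. τψ_λ ≠ 0), for every θ ∈ ℝ one has λ ∉ σ_p(A^θ). Equivalently: if λ is a simple isolated eigenvalue of A and τψ_λ ≠ 0, no rank-one singular perturbation A^θ preserves the eigenvalue λ. -/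
open scoped ComplexInnerProductSpace

/-- In the rank-one setting 𝔥 = ℂ, if λ is a simple isolated eigenvalue of A
with normalized eigenvector ψ_λ and τψ_λ ≠ 0 (i.e. R(τP_λ) = ℂ), then for every θ ∈ ℝ
one has λ ∉ σ_p(A^θ). -/
theorem simple_eigenvalue_not_preserved
    {H : Type*} [NormedAddCommGroup H] [InnerProductSpace ℂ H] [CompleteSpace H]
    (A : H →ₗ.[ℂ] H) (hAdense : Dense (A.domain : Set H))
    (hAsa : A.adjoint = A)
    -- `0 ∈ ρ(A)`
    (Ainv : H →L[ℂ] H) (hAinv_mem : ∀ ψ : H, Ainv ψ ∈ A.domain)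
    (hAinv : ∀ ψ : H, A ⟨Ainv ψ, hAinv_mem ψ⟩ = ψ)
    (hAinv' : ∀ x : A.domain, Ainv (A x) = (x : H))
    -- `τ : D(A) → ℂ` graph-norm bounded, surjective, dense kernel
    (τ : A.domain →ₗ[ℂ] ℂ)
    (hτbdd : ∃ C : ℝ, ∀ x : A.domain, ‖τ x‖ ≤ C * (‖(x : H)‖ + ‖A x‖))
    (hτsurj : Function.Surjective τ)
    (hτker : Dense (Subtype.val '' {x : A.domain | τ x = 0} : Set H))
    -- `lam` is an eigenvalue with eigenprojection `P`
    (lam : ℝ)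
    (P : H →L[ℂ] H)
    (hP_mem : ∀ ψ : H, P ψ ∈ A.domain)
    (hP_idem : ∀ ψ : H, P (P ψ) = P ψ)
    (hP_sa : ∀ ψ φ : H, ⟪P ψ, φ⟫ = ⟪ψ, P φ⟫)
    (hP_eig : ∀ ψ : H, A ⟨P ψ, hP_mem ψ⟩ = (lam : ℂ) • P ψ)
    (hP_fix : ∀ x : A.domain, A x = (lam : ℂ) • (x : H) → P x = x)
    -- `lam` is isolated
    (hiso : ∃ ε > 0, ∀ μ : ℂ, μ ≠ (lam : ℂ) → ‖μ - (lam : ℂ)‖ < ε →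
      ∃ R : H →L[ℂ] H, ∃ hm : ∀ ψ : H, R ψ ∈ A.domain,
        (∀ ψ : H, A ⟨R ψ, hm ψ⟩ - μ • R ψ = ψ) ∧
        (∀ x : A.domain, R (A x - μ • (x : H)) = (x : H)))
    -- `lam` is simple with normalized eigenvector `ψλ`, and `τψλ ≠ 0`
    (ψl : A.domain) (hψl_ne : (ψl : H) ≠ 0) (hψl_norm : ‖(ψl : H)‖ = 1)
    (hψl_eig : A ψl = (lam : ℂ) • (ψl : H))
    (hsimple : ∀ x : A.domain, A x = (lam : ℂ) • (x : H) → ∃ c : ℂ, (x : H) = c • (ψl : H))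
    (hτψl : τ ψl ≠ 0)
    -- `G₀ := (τ (−A)⁻¹)*`
    (G0 : ℂ →L[ℂ] H)
    (hG0 : ∀ (ξ : ℂ) (ψ : H), ⟪G0 ξ, ψ⟫ = ⟪ξ, τ ⟨-(Ainv ψ), neg_mem (hAinv_mem ψ)⟩⟫) :
    ∀ θ : ℝ, ¬ ∃ (φ₀ : A.domain) (ξ : ℂ), τ φ₀ = (θ : ℂ) * ξ ∧
      (φ₀ : H) + G0 ξ ≠ 0 ∧ A φ₀ = (lam : ℂ) • ((φ₀ : H) + G0 ξ) := by

  intro θ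
  rintro ⟨φ₀, ξ, hτφ, hne, hEig⟩
  -- symmetry of A
  have hsym : ∀ x y : A.domain, ⟪A x, (y : H)⟫ = ⟪(x : H), A y⟫ := by
    have h := LinearPMap.adjoint_isFormalAdjoint (T := A) hAdense
    rw [hAsa] at h
    exact fun x y => h x y
  -- lam ≠ 0
  have hlam_ne : (lam : ℂ) ≠ 0 := by
    intro h0
    apply hψl_ne
    have := hAinv' ψl
    rw [hψl_eig, h0, zero_smul, map_zero] at this
    exact this.symm
  -- Ainv ψl = lam⁻¹ • ψl
  have hAinvψl : Ainv (ψl : H) = (lam : ℂ)⁻¹ • (ψl : H) := by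
    have h1 := hAinv' ψl
    rw [hψl_eig, map_smul] at h1
    exact ((inv_smul_eq_iff₀ hlam_ne).mpr h1.symm).symm
  -- ⟪G0 ξ, ψl⟫ = conj ξ * (-(lam⁻¹) * τ ψl)
  have hkey : ⟪G0 ξ, (ψl : H)⟫ = (starRingEnd ℂ) ξ * (-(lam : ℂ)⁻¹ * τ ψl) := by
    have h := hG0 ξ (ψl : H)
    have hmem : -(Ainv (ψl : H)) ∈ A.domain := neg_mem (hAinv_mem (ψl : H))
    have heq : (⟨-(Ainv (ψl : H)), hmem⟩ : A.domain) = (-(lam : ℂ)⁻¹) • ψl := by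
      apply Subtype.ext
      simp [hAinvψl, neg_smul]
    rw [heq] at h
    rw [h, map_smul]
    simp [RCLike.inner_apply, mul_comm, mul_assoc, mul_left_comm]
  -- take inner product of eigen equation with ψl
  have hz : ⟪(ψl : H), G0 ξ⟫ = 0 := by
    have h1 : ⟪(ψl : H), A φ₀⟫ = (lam : ℂ) * ⟪(ψl : H), (φ₀ : H)⟫ := by
      rw [← hsym ψl φ₀, hψl_eig, inner_smul_left]
      simp [Complex.conj_ofReal]
    have h2 : ⟪(ψl : H), A φ₀⟫
        = (lam : ℂ) * (⟪(ψl : H), (φ₀ : H)⟫ + ⟪(ψl : H), G0 ξ⟫) := by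
      rw [hEig, inner_smul_right, inner_add_right]
    have h3 : (lam : ℂ) * ⟪(ψl : H), G0 ξ⟫ = 0 := by
      have := h1.symm.trans h2
      linear_combination this.symm
    exact (mul_eq_zero.mp h3).resolve_left hlam_ne
  -- hence ξ = 0
  have hξ : ξ = 0 := by
    have h0 : ⟪G0 ξ, (ψl : H)⟫ = 0 := by
      rw [← inner_conj_symm, hz, map_zero]
    rw [hkey] at h0
    rcases mul_eq_zero.mp h0 with h | h
    · simpa using congrArg (starRingEnd ℂ) h
    · rcases mul_eq_zero.mp h with h' | h'
      · exact absurd h' (by simp [hlam_ne])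
      · exact absurd h' hτψl
  subst hξ
  rw [map_zero, add_zero] at hne hEig
  -- φ₀ is an eigenvector, so φ₀ = c • ψl
  obtain ⟨c, hc⟩ := hsimple φ₀ hEig
  have hcd : φ₀ = c • ψl := Subtype.ext hc
  have hτ0 : τ φ₀ = 0 := by simpa using hτφ
  rw [hcd, map_smul] at hτ0
  have hc0 : c = 0 := by
    rcases (by simpa using hτ0 : c = 0 ∨ τ ψl = 0) with h | h
    · exact h
    · exact absurd h hτψl
  apply hne
  rw [hc, hc0, zero_smul]
end
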